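/- Let P be a finite bounded poset with a generalized recursive atom ordering Σ. Then for any u < v in P and any root r for [u,v], the Σ-first atom of [u,v]_r is also the first atom of [u,v]_r in the chain-atom ordering obtained by applying the atom reordering process to Σ (with respect to any linear extension of P). -/

import Mathlib

/-- `l` is a saturated chain from `x` to `y` in the poset `α`:
a list `x = x₀ ⋖ x₁ ⋖ ⋯ ⋖ x_k = y` of elements, each covered by the next. -/
def SatChain {α : Type*} [PartialOrder α] (x y : α) (l : List α) : Prop :=
  l.Chain' (· ⋖ ·) ∧ l.head? = some x ∧ l.getLast? = some y

/-- A chain-atom ordering of a bounded poset `α`: for each `u : α` and each root `r`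
(a saturated chain from `⊥` to `u`, recorded as a list ending in `u`), a strict linear
order on the atoms of the rooted interval `[u, ⊤]_r`, i.e. on the elements covering `u`.
The relation is recorded for all pairs `(u, r)`; only genuine roots are relevant. -/
structure ChainAtomOrdering (α : Type*) [PartialOrder α] where
  lt : α → List α → α → α → Prop
  irrefl : ∀ u r a, ¬ lt u r a a
  trans : ∀ u r a b c, lt u r a b → lt u r b c → lt u r a c
  total : ∀ u r a b, u ⋖ a → u ⋖ b → a ≠ b → lt u r a b ∨ lt u r b a

/-- `a` is the first atom of the rooted interval `[u,v]_r` in the chain-atom ordering `S`. -/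
def ChainAtomOrdering.IsFirstAtom {α : Type*} [PartialOrder α] (S : ChainAtomOrdering α)
    (u v : α) (r : List α) (a : α) : Prop :=
  u ⋖ a ∧ a ≤ v ∧ ∀ b, u ⋖ b → b ≤ v → b ≠ a → S.lt u r a b

/-- `IsGRAO S u v r`: the restriction of the chain-atom ordering `S` to the rooted
interval `[u,v]_r` is a generalized recursive atom ordering (GRAO) of `[u,v]`.
Either `[u,v]` has length 1, or: (i)(a) for each atom `a` of `[u,v]_r` the restriction
to `[a,v]_{r·a}` is a GRAO; (i)(b) for each atom `a` and each `a ⋖ x ⋖ w ≤ v`, either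
the first atom of `[a,w]_{r·a}` lies above some atom of `[u,v]_r` earlier than `a`, or
no atom of `[a,w]_{r·a}` does; (ii) if atoms `ai, aj` of `[u,v]_r` with `ai` earlier
than `aj` lie below a common `y ≤ v`, then some `z` with `aj ⋖ z ≤ y` lies above an
atom of `[u,v]_r` earlier than `aj`. -/
inductive IsGRAO {α : Type*} [PartialOrder α] (S : ChainAtomOrdering α) :
    α → α → List α → Prop
  | base (u v : α) (r : List α) (h : u ⋖ v) : IsGRAO S u v r
  | step (u v : α) (r : List α)
      (ia : ∀ a, u ⋖ a → a ≤ v → IsGRAO S a v (r ++ [a]))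
      (ib : ∀ a x w, u ⋖ a → a ≤ v → a ⋖ x → x ⋖ w → w ≤ v →
        (∃ b, S.IsFirstAtom a w (r ++ [a]) b ∧
          ∃ a', u ⋖ a' ∧ a' ≤ v ∧ S.lt u r a' a ∧ a' < b) ∨
        (∀ b a', a ⋖ b → b ≤ w → u ⋖ a' → a' ≤ v → S.lt u r a' a → ¬ a' < b))
      (ii : ∀ ai aj y, u ⋖ ai → ai ≤ v → u ⋖ aj → aj ≤ v → S.lt u r ai aj →
        ai < y → aj < y → y ≤ v →
        ∃ ak z, u ⋖ ak ∧ ak ≤ v ∧ S.lt u r ak aj ∧ aj ⋖ z ∧ z ≤ y ∧ ak < z) :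
      IsGRAO S u v r

/-- `IsRAO S u v r`: the restriction of the chain-atom ordering `S` to the rooted
interval `[u,v]_r` is a recursive atom ordering (RAO) of `[u,v]`.  It differs from a
GRAO only in condition (i)(b): for each atom `a` of `[u,v]_r`, every atom of
`[a,v]_{r·a}` lying above some atom of `[u,v]_r` earlier than `a` must precede every
atom of `[a,v]_{r·a}` lying above no such atom. -/
inductive IsRAO {α : Type*} [PartialOrder α] (S : ChainAtomOrdering α) :
    α → α → List α → Prop
  | base (u v : α) (r : List α) (h : u ⋖ v) : IsRAO S u v r
  | step (u v : α) (r : List α)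
      (ia : ∀ a, u ⋖ a → a ≤ v → IsRAO S a v (r ++ [a]))
      (ib : ∀ a b c, u ⋖ a → a ≤ v → a ⋖ b → b ≤ v → a ⋖ c → c ≤ v →
        (∃ a', u ⋖ a' ∧ a' ≤ v ∧ S.lt u r a' a ∧ a' < b) →
        (∀ a', u ⋖ a' → a' ≤ v → S.lt u r a' a → ¬ a' < c) →
        S.lt a (r ++ [a]) b c)
      (ii : ∀ ai aj y, u ⋖ ai → ai ≤ v → u ⋖ aj → aj ≤ v → S.lt u r ai aj →
        ai < y → aj < y → y ≤ v →
        ∃ ak z, u ⋖ ak ∧ ak ≤ v ∧ S.lt u r ak aj ∧ aj ⋖ z ∧ z ≤ y ∧ ak < z) :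
      IsRAO S u v r

/-- `MemF S uminus rminus u v a`: the atom `a` of the rooted interval `[u,v]_{rminus·u}`
belongs to the set `F_r(u,v)`: `a` lies above some atom `u'` of `[uminus,v]_{rminus}`
that comes earlier than `u` in the `S`-order on the atoms of `[uminus,⊤]_{rminus}`. -/
def MemF {α : Type*} [PartialOrder α] (S : ChainAtomOrdering α)
    (uminus : α) (rminus : List α) (u v a : α) : Prop :=
  u ⋖ a ∧ a ≤ v ∧ ∃ u', uminus ⋖ u' ∧ u' ≤ v ∧ S.lt uminus rminus u' u ∧ u' < a

/-- `MemG S uminus rminus u v a`: the atom `a` of `[u,v]_{rminus·u}` belongs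
to `G_r(u,v)`, the complement of `F_r(u,v)` among the atoms of `[u,v]`. -/
def MemG {α : Type*} [PartialOrder α] (S : ChainAtomOrdering α)
    (uminus : α) (rminus : List α) (u v a : α) : Prop :=
  u ⋖ a ∧ a ≤ v ∧ ¬ MemF S uminus rminus u v a

/-- `IsReorderingOn v Ω Γ`: the chain-atom ordering `Γ` (restricted to the interval
`[⊥,v]`) is the result of applying the atom reordering process to the restriction of
`Ω` to `[⊥,v]`.  This is the declarative characterization of the bottom-to-top
reordering procedure (for any linear extension): the order on the atoms of `[⊥,v]`
is unchanged, and for each `u ≠ ⊥` with root `rminus·u`, the elements of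
`F_r(u,v)` (computed with respect to the already-reordered orders strictly below `u`,
i.e. with respect to `Γ`) precede those of `G_r(u,v)`, and the relative `Ω`-order
within `F_r(u,v)` and within `G_r(u,v)` is preserved. -/
def IsReorderingOn {α : Type*} [PartialOrder α] [OrderBot α] (v : α)
    (Om Ga : ChainAtomOrdering α) : Prop :=
  (∀ a b, (⊥ : α) ⋖ a → a ≤ v → (⊥ : α) ⋖ b → b ≤ v →
    (Ga.lt ⊥ [⊥] a b ↔ Om.lt ⊥ [⊥] a b)) ∧
  (∀ (rminus : List α) (uminus u : α), SatChain (⊥ : α) uminus rminus → uminus ⋖ u →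
    ∀ a b, u ⋖ a → a ≤ v → u ⋖ b → b ≤ v →
      (Ga.lt u (rminus ++ [u]) a b ↔
        (MemF Ga uminus rminus u v a ∧ ¬ MemF Ga uminus rminus u v b) ∨
        ((MemF Ga uminus rminus u v a ↔ MemF Ga uminus rminus u v b) ∧
          Om.lt u (rminus ++ [u]) a b)))

/-- `Γ` is the result of applying the atom reordering process to `Ω` on all of `α`. -/
def IsReordering {α : Type*} [PartialOrder α] [BoundedOrder α]
    (Om Ga : ChainAtomOrdering α) : Prop :=
  IsReorderingOn (⊤ : α) Om Ga

/-!
Induct along the root `r`. Whether an atom `x` of `[u,⊤]` lies in `F(u)` only records whether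
`u` is the first atom of `[um,x]`, where `um` precedes `u` in `r`; so once first atoms at `um`
survive the reordering, `F(u)` is the same whether computed with `S` or with the reordered
ordering. The GRAO conditions (ii) and (i)(b) show that the `S`-first atom of `[u,v]` lies in
`F(u)` as soon as any atom of `[u,v]` does, so it still comes first after `F(u)` is moved
to the front.
-/

section

variable {α : Type*} [PartialOrder α]

@[elab_as_elim]
theorem SatChain.snoc_induction {x : α} {motive : α → List α → Prop} (single : motive x [x])
    (snoc : ∀ lm um u, SatChain x um lm → um ⋖ u → motive um lm → motive u (lm ++ [u]))
    {u : α} {l : List α} (h : SatChain x u l) : motive u l := by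
  induction l using List.reverseRecOn generalizing u with
  | nil => simp [SatChain] at h
  | append_singleton lm y ih =>
    obtain ⟨hch, hhead, hlast⟩ := h
    obtain rfl : y = u := by simpa using hlast
    rcases List.eq_nil_or_concat' lm with rfl | ⟨lm', um, rfl⟩
    · obtain rfl : y = x := by simpa using hhead
      exact single
    · obtain ⟨hch', -, hlink⟩ := List.isChain_append.mp hch
      have hsat : SatChain x um (lm' ++ [um]) :=
        ⟨hch', by simpa using hhead, by simp⟩
      exact snoc _ um y hsat (hlink um (by simp) y (by simp)) (ih hsat)

namespace ChainAtomOrdering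

variable (S : ChainAtomOrdering α)

theorem lt_asymm {u : α} {r : List α} {a b : α} (hab : S.lt u r a b) : ¬ S.lt u r b a :=
  fun hba => S.irrefl u r a (S.trans u r a b a hab hba)

theorem exists_minimal [Finite α] (u : α) (r : List α) {T : Set α} (hT : ∀ x ∈ T, u ⋖ x)
    (hne : T.Nonempty) : ∃ m ∈ T, ∀ x ∈ T, x ≠ m → S.lt u r m x := by
  have : IsStrictOrder α (S.lt u r) :=
    { irrefl := S.irrefl u r, trans := S.trans u r }
  obtain ⟨m, hm, hmin⟩ := (Finite.wellFounded_of_trans_of_irrefl (S.lt u r)).has_min T hne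
  exact ⟨m, hm, fun x hx hxm =>
    (S.total u r m x (hT m hm) (hT x hx) (Ne.symm hxm)).resolve_right (hmin x hx)⟩

theorem exists_isFirstAtom [Finite α] {u v b : α} (r : List α) (hb : u ⋖ b) (hbv : b ≤ v) :
    ∃ a, S.IsFirstAtom u v r a := by
  obtain ⟨a, ⟨hua, hav⟩, hmin⟩ :=
    S.exists_minimal u r (T := {z | u ⋖ z ∧ z ≤ v}) (fun _ hz => hz.1) ⟨b, hb, hbv⟩
  exact ⟨a, hua, hav, fun c hc hcv hca => hmin c ⟨hc, hcv⟩ hca⟩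

theorem memF_top_iff [OrderTop α] {um u x c : α} {rm : List α}
    (hc : S.IsFirstAtom um x rm c) (hu : um ⋖ u) (hx : u ⋖ x) :
    MemF S um rm u ⊤ x ↔ c ≠ u := by
  constructor
  · rintro ⟨-, -, u', hu', -, hlt, hu'x⟩ rfl
    exact S.lt_asymm hlt (hc.2.2 u' hu' hu'x.le (fun h => S.irrefl _ _ _ (h ▸ hlt)))
  · intro hcu
    have hcx : c ≠ x := fun h => (h ▸ hc.1).2 hu.lt hx.lt
    exact ⟨hx, le_top, c, hc.1, le_top, hc.2.2 u hu hx.le (Ne.symm hcu),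
      lt_of_le_of_ne hc.2.1 hcx⟩

end ChainAtomOrdering

theorem IsGRAO.self (S : ChainAtomOrdering α) (v : α) (r : List α) : IsGRAO S v v r :=
  .step v v r (fun _ ha hav => absurd ha.lt hav.not_gt)
    (fun _ _ _ ha hav _ _ _ => absurd ha.lt hav.not_gt)
    (fun _ _ _ ha hav _ _ _ _ _ _ => absurd ha.lt hav.not_gt)

theorem IsGRAO.of_satChain [BoundedOrder α] {S : ChainAtomOrdering α}
    (h : IsGRAO S ⊥ ⊤ [⊥]) {u : α} {l : List α} (hl : SatChain ⊥ u l) :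
    IsGRAO S u ⊤ l := by
  refine SatChain.snoc_induction (motive := fun u l => IsGRAO S u ⊤ l) h ?_ hl
  rintro lm um u - hu (⟨_, _, _, hum⟩ | ⟨_, _, _, ia, -, -⟩)
  · obtain rfl : u = ⊤ := (hum.eq_or_eq hu.le le_top).resolve_left hu.ne'
    exact IsGRAO.self S ⊤ _
  · exact ia u hu le_top

/-- Otherwise the `S`-least atom `b₀ ≠ a` of `[u,v]` in `F(u)` has by (ii) a cover `z ≤ v`
above an atom earlier than `b₀`, and then (i)(b) at `um` puts the first atom of `[u,z]`, which
precedes `b₀`, into `F(u)`. -/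
theorem IsGRAO.memF_of_isFirstAtom [Finite α] {S : ChainAtomOrdering α} {um w u v a b : α}
    {rm : List α} (hg : IsGRAO S um w rm) (hu : um ⋖ u) (hvw : v ≤ w)
    (ha : S.IsFirstAtom u v (rm ++ [u]) a) (hb : MemF S um rm u w b) (hbv : b ≤ v) :
    MemF S um rm u w a := by
  obtain ⟨b₀, ⟨hb₀F, hb₀v⟩, hmin⟩ := S.exists_minimal u (rm ++ [u])
    (T := {c | MemF S um rm u w c ∧ c ≤ v}) (fun _ hc => hc.1.1) ⟨b, hb, hbv⟩
  by_contra haF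
  have hb₀a : b₀ ≠ a := fun h => haF (h ▸ hb₀F)
  have hab₀ : S.lt u (rm ++ [u]) a b₀ := ha.2.2 b₀ hb₀F.1 hb₀v hb₀a
  have hav : a < v := lt_of_le_of_ne ha.2.1 fun h =>
    hb₀a ((ha.1.eq_or_eq hb₀F.1.le (h ▸ hb₀v)).resolve_left hb₀F.1.ne')
  have hb₀v' : b₀ < v := lt_of_le_of_ne hb₀v fun h =>
    hb₀a ((hb₀F.1.eq_or_eq ha.1.le (h ▸ ha.2.1)).resolve_left ha.1.ne').symm
  have huw : u < w := ha.1.lt.trans (hav.trans_le hvw)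
  obtain ⟨_, _, _, hcov⟩ | ⟨_, _, _, ia, ib, -⟩ := hg
  · exact hcov.2 hu.lt huw
  obtain ⟨_, _, _, hcov⟩ | ⟨_, _, _, -, -, ii⟩ := ia u hu huw.le
  · exact hcov.2 ha.1.lt (hav.trans_le hvw)
  obtain ⟨ak, z, hak, -, hakb₀, hb₀z, hzv, hakz⟩ :=
    ii a b₀ v ha.1 (ha.2.1.trans hvw) hb₀F.1 (hb₀v.trans hvw) hab₀ hav hb₀v' hvw
  rcases ib u b₀ z hu huw.le hb₀F.1 hb₀z (hzv.trans hvw) with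
    ⟨c, hc, u₃, hu₃, hu₃w, hu₃u, hu₃c⟩ | hnone
  · have hcb₀ : c ≠ b₀ := by
      rintro rfl
      exact S.lt_asymm hakb₀
        (hc.2.2 ak hak hakz.le fun h => S.irrefl _ _ _ (h ▸ hakb₀))
    have hcT : MemF S um rm u w c ∧ c ≤ v :=
      ⟨⟨hc.1, (hc.2.1.trans hzv).trans hvw, u₃, hu₃, hu₃w, hu₃u, hu₃c⟩, hc.2.1.trans hzv⟩
    exact S.lt_asymm (hmin c hcT hcb₀) (hc.2.2 b₀ hb₀F.1 hb₀z.le (Ne.symm hcb₀))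
  · obtain ⟨hb₀u, -, u', hu', hu'w, hu'u, hu'b₀⟩ := hb₀F
    exact hnone b₀ u' hb₀u hb₀z.le hu' hu'w hu'u hu'b₀

theorem IsReordering.isFirstAtom_snoc [BoundedOrder α] [Finite α] {S S' : ChainAtomOrdering α}
    (hre : IsReordering S S') {um u v a : α} {lm : List α} (hg : IsGRAO S um ⊤ lm)
    (hlm : SatChain ⊥ um lm) (hu : um ⋖ u)
    (hfirst : ∀ x c, S.IsFirstAtom um x lm c → S'.IsFirstAtom um x lm c)
    (ha : S.IsFirstAtom u v (lm ++ [u]) a) : S'.IsFirstAtom u v (lm ++ [u]) a := by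
  have hF : ∀ x, u ⋖ x → (MemF S' um lm u ⊤ x ↔ MemF S um lm u ⊤ x) := by
    intro x hx
    obtain ⟨c, hc⟩ := S.exists_isFirstAtom lm hu hx.le
    rw [S.memF_top_iff hc hu hx, S'.memF_top_iff (hfirst x c hc) hu hx]
  refine ⟨ha.1, ha.2.1, fun b hb hbv hba => ?_⟩
  rw [hre.2 lm um u hlm hu a b ha.1 le_top hb le_top, hF a ha.1, hF b hb]
  have hFab : MemF S um lm u ⊤ b → MemF S um lm u ⊤ a :=
    fun hFb => hg.memF_of_isFirstAtom hu le_top ha hFb hbv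
  have hab := ha.2.2 b hb hbv hba
  tauto

end

theorem stmt_9_general {α : Type*} [PartialOrder α] [BoundedOrder α] [Fintype α]
    (S : ChainAtomOrdering α) (h : IsGRAO S ⊥ ⊤ [⊥])
    (S' : ChainAtomOrdering α) (hre : IsReordering S S')
    (u v : α) (r : List α) (hr : SatChain (⊥ : α) u r)
    (a : α) (ha : S.IsFirstAtom u v r a) :
    S'.IsFirstAtom u v r a := by
  refine SatChain.snoc_induction
    (motive := fun u r => ∀ v a, S.IsFirstAtom u v r a → S'.IsFirstAtom u v r a) ?_ ?_ hr v a ha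
  · intro v a ha
    exact ⟨ha.1, ha.2.1, fun b hb hbv hba =>
      (hre.1 a b ha.1 le_top hb le_top).mpr (ha.2.2 b hb hbv hba)⟩
  · intro lm um u hlm hu ih v a ha
    exact hre.isFirstAtom_snoc (h.of_satChain hlm) hlm hu ih ha

/-- For a GRAO `S` of a finite bounded poset: for any `u < v` and any root `r` for
`[u,v]`, the `S`-first atom of `[u,v]_r` remains the first atom of `[u,v]_r` after
applying the atom reordering process (for any linear extension; the result is
characterized by `IsReordering`). -/
theorem stmt_9 {α : Type*} [PartialOrder α] [BoundedOrder α] [Fintype α]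
    (S : ChainAtomOrdering α) (h : IsGRAO S ⊥ ⊤ [⊥])
    (S' : ChainAtomOrdering α) (hre : IsReordering S S')
    (u v : α) (huv : u < v) (r : List α) (hr : SatChain (⊥ : α) u r)
    (a : α) (ha : S.IsFirstAtom u v r a) :
    S'.IsFirstAtom u v r a :=
  stmt_9_general S h S' hre u v r hr a ha
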